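/- For any matrix A ∈ ℝ^{n×m} and index sets I (rows) and J (columns), the CUR approximation error satisfies ‖A − A(:,J)A(:,J)† A A(I,:)† A(I,:)‖ ≤ ‖A − A(:,J)A(:,J)† A‖ + ‖A − A A(I,:)† A(I,:)‖ in the spectral norm. -/

import Mathlib

open Matrix

noncomputable def specNorm {m n : Type*} [Fintype m] [Fintype n] [DecidableEq n]
    (A : Matrix m n ℝ) : ℝ :=
  ‖LinearMap.toContinuousLinearMap (Matrix.toEuclideanLin A)‖

noncomputable def sMin {m n : Type*} [Fintype m] [Fintype n] [DecidableEq n]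
    (A : Matrix m n ℝ) : ℝ :=
  Real.sqrt (⨅ i, ((show (Aᵀ * A).IsHermitian by simpa [Matrix.conjTranspose_eq_transpose_of_trivial] using Matrix.isHermitian_conjTranspose_mul_self A)).eigenvalues i)

noncomputable def singVals {m n : ℕ} (A : Matrix (Fin m) (Fin n) ℝ) : Fin n → ℝ :=
  fun i =>
    Real.sqrt (((show (Aᵀ * A).IsHermitian by simpa [Matrix.conjTranspose_eq_transpose_of_trivial] using Matrix.isHermitian_conjTranspose_mul_self A)).eigenvalues
      (Tuple.sort ((show (Aᵀ * A).IsHermitian by simpa [Matrix.conjTranspose_eq_transpose_of_trivial] using Matrix.isHermitian_conjTranspose_mul_self A)).eigenvalues i.rev))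

noncomputable def pinv {m n : Type*} [Fintype m] [Fintype n] (A : Matrix m n ℝ) : Matrix n m ℝ :=
  open Classical in
  if h : ∃ B : Matrix n m ℝ,
      A * B * A = A ∧ B * A * B = B ∧ (A * B)ᵀ = A * B ∧ (B * A)ᵀ = B * A
  then h.choose else 0

/-! Writing `P = C C†` and `Q = R† R`, one has `A - P A Q = (A - A Q) + (A - P A) Q`, and `Q` is an
orthogonal projection, so `‖(A - P A) Q‖ ≤ ‖A - P A‖`. -/

open scoped Matrix.Norms.L2Operator

lemma isStarProjection_pinv_mul_self {m n : Type*} [Fintype m] [Fintype n]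
    (A : Matrix m n ℝ) : IsStarProjection (pinv A * A) := by
  classical
  by_cases h : ∃ B : Matrix n m ℝ,
      A * B * A = A ∧ B * A * B = B ∧ (A * B)ᵀ = A * B ∧ (B * A)ᵀ = B * A
  · obtain ⟨-, hBAB, -, hBA⟩ := h.choose_spec
    rw [pinv, dif_pos h]
    refine ⟨?_, ?_⟩
    · rw [IsIdempotentElem, ← Matrix.mul_assoc, hBAB]
    · rw [IsSelfAdjoint, star_eq_conjTranspose, conjTranspose_eq_transpose_of_trivial, hBA]
  · -- `pinv` falls back to `0` here, and `0` is still a projection.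
    rw [pinv, dif_neg h, Matrix.zero_mul]
    exact IsStarProjection.zero _

lemma specNorm_eq_norm {m n : Type*} [Fintype m] [Fintype n] [DecidableEq n]
    (A : Matrix m n ℝ) : specNorm A = ‖A‖ := rfl

lemma norm_sub_mul_mul_le {m n : Type*} [Fintype m] [Fintype n] [DecidableEq n]
    (A : Matrix m n ℝ) (P : Matrix m m ℝ) {Q : Matrix n n ℝ} (hQ : ‖Q‖ ≤ 1) :
    ‖A - P * A * Q‖ ≤ ‖A - P * A‖ + ‖A - A * Q‖ :=
  calc ‖A - P * A * Q‖ = ‖(A - A * Q) + (A - P * A) * Q‖ := by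
        congr 1; rw [Matrix.sub_mul]; abel
    _ ≤ ‖A - A * Q‖ + ‖(A - P * A) * Q‖ := norm_add_le _ _
    _ ≤ ‖A - A * Q‖ + ‖A - P * A‖ * ‖Q‖ := by gcongr; exact l2_opNorm_mul _ _
    _ ≤ ‖A - A * Q‖ + ‖A - P * A‖ := by
        gcongr; exact mul_le_of_le_one_right (norm_nonneg _) hQ
    _ = ‖A - P * A‖ + ‖A - A * Q‖ := add_comm _ _

theorem cur_error_le_col_add_row {n m p q : ℕ} (A : Matrix (Fin n) (Fin m) ℝ)
    (I : Fin p → Fin n) (J : Fin q → Fin m) :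
    specNorm (A - A.submatrix id J * pinv (A.submatrix id J) * A *
        pinv (A.submatrix I id) * A.submatrix I id) ≤
      specNorm (A - A.submatrix id J * pinv (A.submatrix id J) * A) +
        specNorm (A - A * pinv (A.submatrix I id) * A.submatrix I id) := by
  simpa only [specNorm_eq_norm, Matrix.mul_assoc] using norm_sub_mul_mul_le A
    (A.submatrix id J * pinv (A.submatrix id J))
    (isStarProjection_pinv_mul_self (A.submatrix I id)).norm_le
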